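/- arXiv:2103.12140 — 5 statements merged into one kernel-verified Lean document; each statement's English description precedes it below -/
import Mathlib

section
/- Under the PI policy, along every sample path and for every horizon T ≥ 1, the number of token messages sent during [1, T] — that is, the number of pairs (i, t) with 1 ≤ t ≤ T such that server i becomes idle at slot t, meaning Q_i(t−1) + a(t)·1{LI(t)=i} > 0 and Q_i(t) = 0 — is at most n plus the number of time slots t ∈ [1, T] with a(t) > 0 (so at most one message is sent per arriving batch, up to the n initial backlogs). -/
/-!
Fix a server `i` and look only at its own queue `q` and the work `A` routed to it; all the
dynamics gives is `q (t+1) ≤ q t + A (t+1)`, so an empty queue stays empty until work arrives.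
Hence between two slots at which server `i` becomes idle there is a slot with `A > 0`, and
sending each idle slot `t` to the last arrival slot `≤ t` (or to `0` if there is none) is
injective. So server `i` sends at most `1 + #{t ≤ T | LI t = i ∧ a t > 0}` tokens, and summing
over `i` partitions the arrival slots according to `LI`.
-/

open Finset

section SingleQueue

variable {q A : ℕ → ℕ}

theorem eq_zero_of_arrivals_eq_zero (hq : ∀ t, q (t + 1) ≤ q t + A (t + 1)) {t₀ t : ℕ}
    (h₀ : q t₀ = 0) (ht : t₀ ≤ t) (hA : ∀ u ∈ Ioc t₀ t, A u = 0) : q t = 0 := by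
  induction t, ht using Nat.le_induction with
  | base => exact h₀
  | succ t ht ih =>
    have hqt : q t = 0 := ih fun u hu => hA u (Ioc_subset_Ioc_right t.le_succ hu)
    have hAt : A (t + 1) = 0 := hA (t + 1) (mem_Ioc.2 ⟨by omega, le_rfl⟩)
    have := hq t
    omega

theorem exists_arrival_of_becomes_idle (hq : ∀ t, q (t + 1) ≤ q t + A (t + 1)) {t₁ t₂ : ℕ}
    (h₁ : q t₁ = 0) (h₁₂ : t₁ < t₂) (h₂ : 0 < q (t₂ - 1) + A t₂) :
    ∃ u ∈ Ioc t₁ t₂, 0 < A u := by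
  by_contra! hA
  replace hA : ∀ u ∈ Ioc t₁ t₂, A u = 0 := fun u hu => Nat.le_zero.1 (hA u hu)
  have hq₂ : q (t₂ - 1) = 0 := eq_zero_of_arrivals_eq_zero hq h₁ (by omega) fun u hu =>
    hA u (Ioc_subset_Ioc_right (Nat.sub_le t₂ 1) hu)
  have hA₂ : A t₂ = 0 := hA t₂ (mem_Ioc.2 ⟨h₁₂, le_rfl⟩)
  omega

theorem card_becomes_idle_le (hq : ∀ t, q (t + 1) ≤ q t + A (t + 1)) (T : ℕ) :
    #{t ∈ Icc 1 T | 0 < q (t - 1) + A t ∧ q t = 0} ≤ #{t ∈ Icc 1 T | 0 < A t} + 1 := by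
  set idle : Finset ℕ := {t ∈ Icc 1 T | 0 < q (t - 1) + A t ∧ q t = 0}
  set arrivals : Finset ℕ := {t ∈ Icc 1 T | 0 < A t}
  let lastArrival : ℕ → ℕ := Nat.findGreatest (fun u => 0 < A u)
  have hmaps : Set.MapsTo lastArrival idle (insert 0 arrivals : Finset ℕ) := by
    intro t ht
    have htT : t ≤ T := (mem_Icc.1 (mem_filter.1 ht).1).2
    by_cases h0 : lastArrival t = 0
    · simp [h0]
    · refine mem_insert_of_mem (mem_filter.2 ⟨mem_Icc.2 ⟨Nat.one_le_iff_ne_zero.2 h0, ?_⟩, ?_⟩)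
      · exact (Nat.findGreatest_le t).trans htT
      · exact Nat.findGreatest_of_ne_zero (P := fun u => 0 < A u) (n := t) rfl h0
  have hmono : StrictMonoOn lastArrival idle := by
    intro t₁ ht₁ t₂ ht₂ h₁₂
    obtain ⟨-, -, hq₁⟩ := mem_filter.1 ht₁
    obtain ⟨-, hload₂, -⟩ := mem_filter.1 ht₂
    obtain ⟨u, hu, hAu⟩ := exists_arrival_of_becomes_idle hq hq₁ h₁₂ hload₂
    rw [mem_Ioc] at hu
    calc lastArrival t₁ ≤ t₁ := Nat.findGreatest_le t₁
      _ < u := hu.1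
      _ ≤ lastArrival t₂ := Nat.le_findGreatest hu.2 hAu
  calc #idle ≤ #(insert 0 arrivals) := card_le_card_of_injOn _ hmaps hmono.injOn
    _ ≤ #arrivals + 1 := card_insert_le _ _

end SingleQueue

theorem card_filter_product {α β : Type*} (s : Finset α) (t : Finset β) (p : α × β → Prop)
    [DecidablePred p] : #{x ∈ s ×ˢ t | p x} = ∑ j ∈ t, #{i ∈ s | p (i, j)} := by
  simp only [card_filter, sum_product_right]

theorem sum_card_filter_routed_pos {ι : Type*} [Fintype ι] [DecidableEq ι] (s : Finset ℕ)
    (a : ℕ → ℕ) (r : ℕ → ι) :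
    ∑ i, #{t ∈ s | 0 < if r t = i then a t else 0} = #{t ∈ s | 0 < a t} := by
  rw [card_eq_sum_card_fiberwise (f := r) (t := univ) fun _ _ => mem_coe.2 (mem_univ _)]
  refine sum_congr rfl fun i _ => congrArg card ?_
  ext t
  by_cases h : r t = i <;> simp [h]

theorem pi_communication_overhead_general
    {n : ℕ}
    (a : ℕ → ℕ) (s : Fin n → ℕ → ℕ)
    (Q : ℕ → Fin n → ℕ) (LI : ℕ → Fin n)
    (hdyn : ∀ t i, Q (t+1) i = Q t i + (if LI (t+1) = i then a (t+1) else 0) - s i (t+1)) :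
    ∀ T : ℕ, 1 ≤ T →
      (((Finset.Icc 1 T) ×ˢ (Finset.univ : Finset (Fin n))).filter
          (fun p => 0 < Q (p.1 - 1) p.2 + (if LI p.1 = p.2 then a p.1 else 0) ∧
            Q p.1 p.2 = 0)).card
        ≤ n + ((Finset.Icc 1 T).filter (fun t => 0 < a t)).card := by
  intro T _
  calc _ = ∑ i, #{t ∈ Icc 1 T | 0 < Q (t - 1) i + (if LI t = i then a t else 0) ∧ Q t i = 0} :=
        card_filter_product _ _ _
    _ ≤ ∑ i, (#{t ∈ Icc 1 T | 0 < if LI t = i then a t else 0} + 1) :=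
        sum_le_sum fun i _ => card_becomes_idle_le (q := (Q · i))
          (A := fun t => if LI t = i then a t else 0)
          (fun t => (hdyn t i).trans_le (Nat.sub_le _ _)) T
    _ = n + #{t ∈ Icc 1 T | 0 < a t} := by
        rw [sum_add_distrib, sum_card_filter_routed_pos, sum_const, card_univ, Fintype.card_fin,
          smul_eq_mul, mul_one, add_comm]

/-- **Communication overhead of PI** (Proposition 1).  Along every sample path of the PI
model and for every horizon `T ≥ 1`, the number of token messages sent during the time slots
`1,…,T` — that is, the number of pairs `(t, i)` with `1 ≤ t ≤ T` such that server `i` becomes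
idle at slot `t`, meaning `Q i (t-1) + a t • 1{LI t = i} > 0` and `Q i t = 0` — is at most
`n` plus the number of time slots `t ∈ [1, T]` with `a t > 0`: at most one message is sent per
arriving batch, up to the `n` initial backlogs.

The sample path is deterministic here: `a t` is the batch size of slot `t`, `s i t` the service
capacity of server `i` in slot `t` (with `1 ≤ s i t ≤ smax`), `Q t i` the queue length of
server `i` at the end of slot `t`, and `LI t` the Last-Idle server of slot `t`; the PI dynamics
`Q (t+1) i = (Q t i + a (t+1) • 1{LI (t+1) = i}) - s i (t+1)` (truncated subtraction in `ℕ`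
realizing `[·]⁺`) hold, the Last-Idle server is idle at the previous slot whenever some server
is idle then, and is unchanged when no server is idle. -/
theorem pi_communication_overhead
    {n : ℕ} (hn : 2 ≤ n) (smax : ℕ)
    (a : ℕ → ℕ) (s : Fin n → ℕ → ℕ)
    (Q : ℕ → Fin n → ℕ) (LI : ℕ → Fin n)
    (hs : ∀ i t, 1 ≤ s i t ∧ s i t ≤ smax)
    (hdyn : ∀ t i, Q (t+1) i = Q t i + (if LI (t+1) = i then a (t+1) else 0) - s i (t+1))
    (hLI_idle : ∀ t, (∃ j, Q t j = 0) → Q t (LI (t+1)) = 0)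
    (hLI_stay : ∀ t, (¬ ∃ j, Q t j = 0) → LI (t+1) = LI t) :
    ∀ T : ℕ, 1 ≤ T →
      (((Finset.Icc 1 T) ×ˢ (Finset.univ : Finset (Fin n))).filter
          (fun p => 0 < Q (p.1 - 1) p.2 + (if LI p.1 = p.2 then a p.1 else 0) ∧
            Q p.1 p.2 = 0)).card
        ≤ n + ((Finset.Icc 1 T).filter (fun t => 0 < a t)).card :=
  pi_communication_overhead_general a s Q LI hdyn
end

section
/- Let n ≥ 2, let μ_1,…,μ_n > 0 and λ ≥ 0 satisfy λ < Σ_{i=1}^n μ_i. Set ε_0 = Σ_{i=1}^n μ_i − λ, μ_min = min_i μ_i, and ε = min(ε_0, μ_min)/4. Then there exists γ ∈ (0,1] such that max_{1 ≤ j ≤ n} { (max(λ − μ_j, 0))^{1+γ} − Σ_{i ≠ j} μ_i } < −2ε. -/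
/-! At `γ = 0` the `j`-th quantity is `max (λ - μ j) 0 - ∑_{i ≠ j} μ i = -min (ε₀, ∑_{i ≠ j} μ i)`,
which is at most `-min (ε₀, μ_min) = -4ε < -2ε` because `n ≥ 2` makes `∑_{i ≠ j} μ i ≥ μ_min`.
Each quantity is continuous in `γ`, so the finitely many strict inequalities persist for all
small `γ > 0`. -/

open Filter Topology Finset

lemma exists_pos_le_one_forall_lt {ι : Type*} [Finite ι] {f : ι → ℝ → ℝ} {c : ℝ}
    (hf : ∀ i, ContinuousAt (f i) 0) (h0 : ∀ i, f i 0 < c) :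
    ∃ γ, 0 < γ ∧ γ ≤ 1 ∧ ∀ i, f i γ < c := by
  have hnear : ∀ᶠ γ in 𝓝 (0 : ℝ), γ ≤ 1 ∧ ∀ i, f i γ < c :=
    (eventually_le_nhds one_pos).and
      (eventually_all.2 fun i => (hf i).eventually_lt_const (h0 i))
  obtain ⟨γ, ⟨hγ1, hγc⟩, hγ0⟩ :=
    ((hnear.filter_mono nhdsWithin_le_nhds).and (self_mem_nhdsWithin (s := Set.Ioi 0))).exists
  exact ⟨γ, hγ0, hγ1, hγc⟩

lemma continuousAt_rpow_one_add (a : ℝ) : ContinuousAt (fun γ : ℝ => a ^ (1 + γ)) 0 :=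
  (Real.continuousAt_const_rpow' (by norm_num)).comp
    (continuous_const.add continuous_id).continuousAt

section Finite

variable {ι : Type*} [Fintype ι] [DecidableEq ι]

lemma max_sub_sum_erase_eq_neg_min (μ : ι → ℝ) (lam : ℝ) (j : ι) :
    max (lam - μ j) 0 - ∑ i ∈ univ.erase j, μ i
      = -min (∑ i, μ i - lam) (∑ i ∈ univ.erase j, μ i) := by
  rw [← max_sub_sub_right, ← max_neg_neg, sum_erase_eq_sub (mem_univ j)]
  congr 1 <;> ring

lemma inf'_le_sum_erase [Nontrivial ι] {μ : ι → ℝ} (hμ : ∀ i, 0 ≤ μ i)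
    (H : (univ : Finset ι).Nonempty) (j : ι) : univ.inf' H μ ≤ ∑ i ∈ univ.erase j, μ i := by
  obtain ⟨k, hk⟩ := exists_ne j
  exact (inf'_le μ (mem_univ k)).trans
    (single_le_sum (fun i _ => hμ i) (mem_erase.2 ⟨hk, mem_univ k⟩))

end Finite

theorem exists_gamma_general
    {n : ℕ} (hn : 2 ≤ n) (μ : Fin n → ℝ) (hμ : ∀ i, 0 < μ i)
    (lam : ℝ) (hload : lam < ∑ i, μ i) :
    ∃ γ : ℝ, 0 < γ ∧ γ ≤ 1 ∧
      ∀ j : Fin n,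
        (max (lam - μ j) 0) ^ ((1 : ℝ) + γ) - ∑ i ∈ Finset.univ.erase j, μ i
          < -2 * (min (∑ i, μ i - lam)
              (Finset.univ.inf'
                (Finset.univ_nonempty_iff.mpr ⟨⟨0, Nat.lt_of_lt_of_le Nat.zero_lt_two hn⟩⟩)
                μ) / 4) := by
  have : Nontrivial (Fin n) := Fin.nontrivial_iff_two_le.2 hn
  set μmin := univ.inf' (univ_nonempty_iff.mpr ⟨⟨0, Nat.lt_of_lt_of_le Nat.zero_lt_two hn⟩⟩) μ
  have hμmin : 0 < μmin := (lt_inf'_iff _).2 fun i _ => hμ i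
  refine exists_pos_le_one_forall_lt
    (fun j => (continuousAt_rpow_one_add _).sub continuousAt_const) fun j => ?_
  simp only [add_zero, Real.rpow_one, max_sub_sum_erase_eq_neg_min]
  have hmin_pos : 0 < min (∑ i, μ i - lam) μmin := lt_min (sub_pos.2 hload) hμmin
  have hmin_le : min (∑ i, μ i - lam) μmin ≤ min (∑ i, μ i - lam) (∑ i ∈ univ.erase j, μ i) :=
    min_le_min_left _ (inf'_le_sum_erase (fun i => (hμ i).le) _ j)
  linarith

/-- **Choice of the exponent `γ`** (existence of `γ` in the drift lemma).  Let `n ≥ 2`,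
`μ 1, …, μ n > 0` and `λ ≥ 0` with `λ < ∑ i, μ i`.  Set `ε₀ = ∑ i, μ i − λ`,
`μ_min = min_i μ i` and `ε = min (ε₀, μ_min) / 4`.  Then there exists `γ ∈ (0, 1]` such that
`max_j { ((λ − μ j)⁺) ^ (1+γ) − ∑_{i ≠ j} μ i } < −2 ε`. -/
theorem exists_gamma
    {n : ℕ} (hn : 2 ≤ n) (μ : Fin n → ℝ) (hμ : ∀ i, 0 < μ i)
    (lam : ℝ) (hlam : 0 ≤ lam) (hload : lam < ∑ i, μ i) :
    ∃ γ : ℝ, 0 < γ ∧ γ ≤ 1 ∧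
      ∀ j : Fin n,
        (max (lam - μ j) 0) ^ ((1 : ℝ) + γ) - ∑ i ∈ Finset.univ.erase j, μ i
          < -2 * (min (∑ i, μ i - lam)
              (Finset.univ.inf'
                (Finset.univ_nonempty_iff.mpr ⟨⟨0, Nat.lt_of_lt_of_le Nat.zero_lt_two hn⟩⟩)
                μ) / 4) :=
  exists_gamma_general hn μ hμ lam hload
end

section
/- Let γ ∈ (0,1], let q be a natural number and r a nonnegative real number. Then (max(q − r, 0))^{1+γ} − q^{1+γ} ≤ −q^γ · min(q, r). -/
/-- **The one-queue drift inequality** used in the drift analysis of the PI policy: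
for `γ ∈ (0,1]`, a natural number `q` (viewed as a nonnegative real) and a real `r ≥ 0`,
`([q − r]⁺) ^ (1+γ) − q ^ (1+γ) ≤ − q ^ γ * (q ⊓ r)`, where powers are real powers. -/
theorem drift_pow_inequality
    (γ : ℝ) (hγ0 : 0 < γ) (hγ1 : γ ≤ 1) (q : ℕ) (r : ℝ) (hr : 0 ≤ r) :
    (max ((q : ℝ) - r) 0) ^ ((1 : ℝ) + γ) - (q : ℝ) ^ ((1 : ℝ) + γ)
      ≤ -((q : ℝ) ^ γ) * min (q : ℝ) r := by
  rcases le_or_gt (q : ℝ) r with h | h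
  · -- r ≥ q : max = 0, min = q
    rw [max_eq_right (by linarith), min_eq_left h,
      Real.zero_rpow (by positivity)]
    rcases eq_or_lt_of_le (Nat.cast_nonneg q : (0:ℝ) ≤ q) with hq | hq
    · rw [← hq, Real.zero_rpow (by positivity), Real.zero_rpow (ne_of_gt hγ0)]
      simp
    · have : (q : ℝ) ^ ((1:ℝ) + γ) = (q : ℝ) ^ γ * (q : ℝ) := by
        rw [add_comm, Real.rpow_add_one (ne_of_gt hq)]
      rw [this]; ring_nf; exact le_refl _
  · -- r < q : max = q - r, min = r
    have hq : (0:ℝ) < q := lt_of_le_of_lt hr h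
    have hqr : (0:ℝ) < (q:ℝ) - r := by linarith
    rw [max_eq_left (le_of_lt hqr), min_eq_right (le_of_lt h)]
    have h1 : ((q:ℝ) - r) ^ ((1:ℝ) + γ) = ((q:ℝ) - r) ^ γ * ((q:ℝ) - r) := by
      rw [add_comm, Real.rpow_add_one (ne_of_gt hqr)]
    have h2 : (q : ℝ) ^ ((1:ℝ) + γ) = (q : ℝ) ^ γ * (q : ℝ) := by
      rw [add_comm, Real.rpow_add_one (ne_of_gt hq)]
    have h3 : ((q:ℝ) - r) ^ γ ≤ (q : ℝ) ^ γ :=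
      Real.rpow_le_rpow (le_of_lt hqr) (by linarith) (le_of_lt hγ0)
    rw [h1, h2]
    nlinarith [Real.rpow_nonneg (le_of_lt hqr) γ]
end

section
/- Let (Ω, ℱ, P) be a probability space, ε > 0, (L_k)_{k≥0} nonnegative integrable random variables, (τ_k)_{k≥0} random variables with τ_0 ≥ 0 and τ_{k+1} − τ_k ≥ 1 almost surely for all k, and σ a random variable with values in ℕ ∪ {∞}. Suppose that for every k ≥ 0: E[(L_{k+1} − L_k)·1{k < σ}] ≤ −ε·E[(τ_{k+1} − τ_k)·1{k < σ}]. Then E[σ] ≤ E[L_0]/ε, so in particular σ < ∞ almost surely, and E[τ_σ] ≤ E[τ_0] + E[L_0]/ε, where τ_σ(ω) = τ_{σ(ω)}(ω). -/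
open MeasureTheory ENNReal

/-! Telescoping the drift inequality gives `ε · ∑ₖ E[(τₖ₊₁ − τₖ)·1{k < σ}] ≤ E[L₀]`. Each
increment is at least one, so this sum dominates `∑ₖ P(k < σ) = E[σ]`; and since
`τ_σ = τ₀ + ∑_{k < σ} (τₖ₊₁ − τₖ)`, the same sum also bounds `E[τ_σ] − E[τ₀]`. -/

lemma ENat.tsum_ite_natCast_lt (m : ℕ) (g : ℕ → ℝ≥0∞) :
    ∑' k : ℕ, (if (k : ℕ∞) < m then g k else 0) = ∑ k ∈ Finset.range m, g k := by
  simp only [Nat.cast_lt]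
  rw [tsum_eq_sum (s := Finset.range m) (fun k hk => by simp_all), Finset.sum_ite_of_true]
  simp

lemma ENat.toENNReal_eq_tsum_ite (n : ℕ∞) :
    (n : ℝ≥0∞) = ∑' k : ℕ, if (k : ℕ∞) < n then 1 else 0 := by
  induction n using ENat.recTopCoe with
  | top => simp
  | coe m => rw [ENat.tsum_ite_natCast_lt]; simp

lemma ENNReal.ofReal_le_ofReal_add_sum_sub (f : ℕ → ℝ) (n : ℕ) :
    ENNReal.ofReal (f n) ≤
      ENNReal.ofReal (f 0) + ∑ k ∈ Finset.range n, ENNReal.ofReal (f (k + 1) - f k) := by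
  induction n with
  | zero => simp
  | succ n ih =>
    calc ENNReal.ofReal (f (n + 1)) = ENNReal.ofReal (f n + (f (n + 1) - f n)) := by ring_nf
      _ ≤ ENNReal.ofReal (f n) + ENNReal.ofReal (f (n + 1) - f n) := ENNReal.ofReal_add_le
      _ ≤ _ := by rw [Finset.sum_range_succ, ← add_assoc]; gcongr

lemma ENNReal.ofReal_toNat_le_add_tsum_ite (f : ℕ → ℝ) (n : ℕ∞) :
    ENNReal.ofReal (f n.toNat) ≤ ENNReal.ofReal (f 0) +
      ∑' k : ℕ, if (k : ℕ∞) < n then ENNReal.ofReal (f (k + 1) - f k) else 0 := by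
  induction n using ENat.recTopCoe with
  | top => simp
  | coe m =>
    rw [ENat.tsum_ite_natCast_lt, ENat.toNat_natCast]
    exact ENNReal.ofReal_le_ofReal_add_sum_sub f m

lemma ENNReal.mul_tsum_le_of_add_mul_le {a b : ℕ → ℝ≥0∞} {c : ℝ≥0∞}
    (h : ∀ k, a (k + 1) + c * b k ≤ a k) : c * ∑' k, b k ≤ a 0 := by
  have partial_sums : ∀ n, a n + c * ∑ k ∈ Finset.range n, b k ≤ a 0 := by
    intro n
    induction n with
    | zero => simp
    | succ n ih =>
      calc a (n + 1) + c * ∑ k ∈ Finset.range (n + 1), b k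
          = a (n + 1) + c * b n + c * ∑ k ∈ Finset.range n, b k := by
            rw [Finset.sum_range_succ, mul_add]; ring
        _ ≤ a 0 := (add_le_add_left (h n) _).trans ih
  rw [ENNReal.tsum_eq_iSup_nat, ENNReal.mul_iSup]
  exact iSup_le fun n => le_add_self.trans (partial_sums n)

section RandomTime

variable {Ω : Type*} [MeasurableSpace Ω] {μ : Measure Ω} {σ : Ω → ℕ∞}

lemma Measurable.measurableSet_natCast_lt (hσ : Measurable σ) (k : ℕ) :
    MeasurableSet {ω | (k : ℕ∞) < σ ω} :=
  hσ (MeasurableSet.of_discrete (s := Set.Ioi (k : ℕ∞)))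

lemma lintegral_tsum_ite_lt (hσ : Measurable σ) {g : ℕ → Ω → ℝ≥0∞}
    (hg : ∀ k, Measurable (g k)) :
    ∫⁻ ω, ∑' k : ℕ, (if (k : ℕ∞) < σ ω then g k ω else 0) ∂μ
      = ∑' k : ℕ, ∫⁻ ω in {ω | (k : ℕ∞) < σ ω}, g k ω ∂μ := by
  have hind : ∀ (k : ℕ) ω, (if (k : ℕ∞) < σ ω then g k ω else 0)
      = {ω | (k : ℕ∞) < σ ω}.indicator (g k) ω := fun k ω => by
    simp [Set.indicator_apply]
  simp_rw [hind]
  rw [lintegral_tsum fun k => ((hg k).indicator (hσ.measurableSet_natCast_lt k)).aemeasurable]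
  simp_rw [lintegral_indicator (hσ.measurableSet_natCast_lt _)]

lemma lintegral_toENNReal_eq_tsum_measure_lt (hσ : Measurable σ) :
    ∫⁻ ω, (σ ω : ℝ≥0∞) ∂μ = ∑' k : ℕ, μ {ω | (k : ℕ∞) < σ ω} := by
  simp_rw [ENat.toENNReal_eq_tsum_ite, lintegral_tsum_ite_lt hσ fun _ => measurable_const,
    setLIntegral_one]

lemma lintegral_ofReal_toNat_le_add_tsum {f : ℕ → Ω → ℝ} (hf : ∀ k, Measurable (f k))
    (hσ : Measurable σ) :
    ∫⁻ ω, ENNReal.ofReal (f (σ ω).toNat ω) ∂μ ≤ ∫⁻ ω, ENNReal.ofReal (f 0 ω) ∂μ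
      + ∑' k : ℕ, ∫⁻ ω in {ω | (k : ℕ∞) < σ ω}, ENNReal.ofReal (f (k + 1) ω - f k ω) ∂μ := by
  rw [← lintegral_tsum_ite_lt (g := fun k ω => ENNReal.ofReal (f (k + 1) ω - f k ω)) hσ
      fun k => ((hf (k + 1)).sub (hf k)).ennreal_ofReal,
    ← lintegral_add_left (hf 0).ennreal_ofReal]
  exact lintegral_mono fun ω => ENNReal.ofReal_toNat_le_add_tsum_ite (f · ω) (σ ω)

lemma measure_le_setLIntegral_ofReal {f : Ω → ℝ} (hf : ∀ᵐ ω ∂μ, 1 ≤ f ω) (s : Set Ω) :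
    μ s ≤ ∫⁻ ω in s, ENNReal.ofReal (f ω) ∂μ := by
  rw [← setLIntegral_one]
  refine lintegral_mono_ae (ae_restrict_of_ae ?_)
  filter_upwards [hf] with ω hω
  simpa using ENNReal.ofReal_le_ofReal hω

lemma setLIntegral_succ_add_mul_le_of_drift {L τ : ℕ → Ω → ℝ} (hτ : ∀ k, Measurable (τ k))
    {c : ℝ≥0∞} {k : ℕ}
    (hdrift : ∫⁻ ω in {ω | (k : ℕ∞) < σ ω},
        (ENNReal.ofReal (L (k + 1) ω) + c * ENNReal.ofReal (τ (k + 1) ω - τ k ω)) ∂μ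
      ≤ ∫⁻ ω in {ω | (k : ℕ∞) < σ ω}, ENNReal.ofReal (L k ω) ∂μ) :
    ∫⁻ ω in {ω | ((k + 1 : ℕ) : ℕ∞) < σ ω}, ENNReal.ofReal (L (k + 1) ω) ∂μ
        + c * ∫⁻ ω in {ω | (k : ℕ∞) < σ ω}, ENNReal.ofReal (τ (k + 1) ω - τ k ω) ∂μ
      ≤ ∫⁻ ω in {ω | (k : ℕ∞) < σ ω}, ENNReal.ofReal (L k ω) ∂μ := by
  have hsub : {ω | ((k + 1 : ℕ) : ℕ∞) < σ ω} ⊆ {ω | (k : ℕ∞) < σ ω} := fun ω hω =>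
    (ENat.natCast_lt_natCast.2 k.lt_succ_self).trans hω
  have hτ_sub : Measurable fun ω => ENNReal.ofReal (τ (k + 1) ω - τ k ω) :=
    ((hτ (k + 1)).sub (hτ k)).ennreal_ofReal
  calc _ ≤ ∫⁻ ω in {ω | (k : ℕ∞) < σ ω}, ENNReal.ofReal (L (k + 1) ω) ∂μ
        + c * ∫⁻ ω in {ω | (k : ℕ∞) < σ ω}, ENNReal.ofReal (τ (k + 1) ω - τ k ω) ∂μ := by
        gcongr
    _ = _ := by rw [lintegral_add_right _ (hτ_sub.const_mul c), lintegral_const_mul c hτ_sub]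
    _ ≤ _ := hdrift

end RandomTime

theorem abstract_drift_criterion_general
    {Ω : Type} [MeasurableSpace Ω] (P : Measure Ω)
    (ε : ℝ) (hε : 0 < ε)
    (L : ℕ → Ω → ℝ) (hL_int : ∀ k, Integrable (L k) P)
    (τ : ℕ → Ω → ℝ) (hτ_meas : ∀ k, Measurable (τ k))
    (hτ_inc : ∀ k, ∀ᵐ ω ∂P, 1 ≤ τ (k + 1) ω - τ k ω)
    (σ : Ω → ℕ∞) (hσ_meas : Measurable σ)
    (hdrift : ∀ k : ℕ,
      ∫⁻ ω in {ω | (k : ℕ∞) < σ ω},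
          (ENNReal.ofReal (L (k + 1) ω)
            + ENNReal.ofReal ε * ENNReal.ofReal (τ (k + 1) ω - τ k ω)) ∂P
        ≤ ∫⁻ ω in {ω | (k : ℕ∞) < σ ω}, ENNReal.ofReal (L k ω) ∂P) :
    (∫⁻ ω, (ENat.toENNReal (σ ω)) ∂P
        ≤ (∫⁻ ω, ENNReal.ofReal (L 0 ω) ∂P) / ENNReal.ofReal ε) ∧
    (∀ᵐ ω ∂P, σ ω < ⊤) ∧
    (∫⁻ ω, ENNReal.ofReal (τ (σ ω).toNat ω) ∂P
        ≤ ∫⁻ ω, ENNReal.ofReal (τ 0 ω) ∂P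
          + (∫⁻ ω, ENNReal.ofReal (L 0 ω) ∂P) / ENNReal.ofReal ε) := by
  set M := ∫⁻ ω, ENNReal.ofReal (L 0 ω) ∂P
  have hε' : ENNReal.ofReal ε ≠ 0 := (ENNReal.ofReal_pos.2 hε).ne'
  have hM : M ≠ ⊤ := ((lintegral_ofReal_le_lintegral_enorm _).trans_lt (hL_int 0).2).ne
  have sum_increments_le : ∑' k : ℕ, ∫⁻ ω in {ω | (k : ℕ∞) < σ ω},
      ENNReal.ofReal (τ (k + 1) ω - τ k ω) ∂P ≤ M / ENNReal.ofReal ε := by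
    rw [ENNReal.le_div_iff_mul_le (.inl hε') (.inl ofReal_ne_top), mul_comm]
    exact (ENNReal.mul_tsum_le_of_add_mul_le fun k =>
      setLIntegral_succ_add_mul_le_of_drift hτ_meas (hdrift k)).trans
        (setLIntegral_le_lintegral _ _)
  have expectation_le : ∫⁻ ω, (σ ω : ℝ≥0∞) ∂P ≤ M / ENNReal.ofReal ε := by
    rw [lintegral_toENNReal_eq_tsum_measure_lt hσ_meas]
    exact (ENNReal.tsum_le_tsum fun k => measure_le_setLIntegral_ofReal (hτ_inc k) _).trans
      sum_increments_le
  refine ⟨expectation_le, ?_, (lintegral_ofReal_toNat_le_add_tsum hτ_meas hσ_meas).trans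
    (add_le_add_right sum_increments_le _)⟩
  filter_upwards [ae_lt_top ((measurable_of_countable _).comp hσ_meas)
    (expectation_le.trans_lt (ENNReal.div_lt_top hM hε')).ne] with ω hω
  exact ENat.toENNReal_lt_top.1 hω

/-- **Abstract state-dependent drift criterion.**  On a probability space, let `ε > 0`, let
`(L k)` be nonnegative integrable random variables, `(τ k)` random variables with `τ 0 ≥ 0` and
`τ (k+1) − τ k ≥ 1` a.s., and `σ` a random time with values in `ℕ ∪ {∞}`.  If for every `k`
the drift condition `E[(L (k+1) − L k)·1, k < σ-] ≤ −ε · E[(τ (k+1) − τ k)·1{k < σ}]` holds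
(stated here, equivalently, in the rearranged form
`E[L (k+1)·1{k<σ}] + ε E[(τ (k+1) − τ k)·1{k<σ}] ≤ E[L k·1{k<σ}]`, all expectations of
nonnegative quantities being taken in `[0,∞]`), then `E[σ] ≤ E[L 0] / ε` — in particular
`σ < ∞` a.s. — and `E[τ_σ] ≤ E[τ 0] + E[L 0] / ε`, where `τ_σ ω = τ (σ ω) ω`. -/
theorem abstract_drift_criterion
    {Ω : Type} [MeasurableSpace Ω] (P : Measure Ω) [IsProbabilityMeasure P]
    (ε : ℝ) (hε : 0 < ε)
    (L : ℕ → Ω → ℝ) (hL_meas : ∀ k, Measurable (L k))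
    (hL_nn : ∀ k, 0 ≤ᵐ[P] L k) (hL_int : ∀ k, Integrable (L k) P)
    (τ : ℕ → Ω → ℝ) (hτ_meas : ∀ k, Measurable (τ k))
    (hτ0 : ∀ᵐ ω ∂P, 0 ≤ τ 0 ω)
    (hτ_inc : ∀ k, ∀ᵐ ω ∂P, 1 ≤ τ (k + 1) ω - τ k ω)
    (σ : Ω → ℕ∞) (hσ_meas : Measurable σ)
    (hdrift : ∀ k : ℕ,
      ∫⁻ ω in {ω | (k : ℕ∞) < σ ω},
          (ENNReal.ofReal (L (k + 1) ω)
            + ENNReal.ofReal ε * ENNReal.ofReal (τ (k + 1) ω - τ k ω)) ∂P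
        ≤ ∫⁻ ω in {ω | (k : ℕ∞) < σ ω}, ENNReal.ofReal (L k ω) ∂P) :
    (∫⁻ ω, (ENat.toENNReal (σ ω)) ∂P
        ≤ (∫⁻ ω, ENNReal.ofReal (L 0 ω) ∂P) / ENNReal.ofReal ε) ∧
    (∀ᵐ ω ∂P, σ ω < ⊤) ∧
    (∫⁻ ω, ENNReal.ofReal (τ (σ ω).toNat ω) ∂P
        ≤ ∫⁻ ω, ENNReal.ofReal (τ 0 ω) ∂P
          + (∫⁻ ω, ENNReal.ofReal (L 0 ω) ∂P) / ENNReal.ofReal ε) :=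
  abstract_drift_criterion_general P ε hε L hL_int τ hτ_meas hτ_inc σ hσ_meas hdrift
end

section
/- Fix k ≥ 0 and a server i, and let l_k = LI(τ_k + 1). Then almost surely, on the event {i ≠ l_k}: E[ Σ_{t = τ_k + 1}^{τ_{k+1}} s_i(t) | ℱ^ξ_{τ_k} ] = μ_i · E[ τ_{k+1} − τ_k | ℱ^ξ_{τ_k} ]. -/
open MeasureTheory ENNReal Filter ProbabilityTheory

namespace PI

/-- The state space of the PI chain: queue lengths and identity of the Last-Idle server. -/
abbrev State (n : ℕ) := (Fin n → ℕ) × Fin n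

/-- The set of idle servers for the queue-length vector `q`. -/
def idleSet {n : ℕ} (q : Fin n → ℕ) : Finset (Fin n) := Finset.univ.filter (fun i => q i = 0)

/-- One step of the PI dynamics: given the current state `x`, the incoming batch size `batch`,
the service capacities `svc` and the uniform tie-breaking noise `u` (converted into a uniform
choice among the idle servers by `choice`).  The new Last-Idle server is chosen uniformly among
the currently idle servers if there are any (otherwise it is unchanged), the whole batch joins
its queue, and then every server serves up to its capacity (`ℕ`-subtraction is truncated,
realizing the positive part `[·]⁺`). -/
def step {n : ℕ} (choice : Finset (Fin n) → ℝ → Fin n)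
    (x : State n) (batch : ℕ) (svc : Fin n → ℕ) (u : ℝ) : State n :=
  let l := if (idleSet x.1).Nonempty then choice (idleSet x.1) u else x.2
  (fun i => x.1 i + (if l = i then batch else 0) - svc i, l)

/-- The PI trajectory `X = (Q, LI)` started from `α`; the step from time `t` to `t+1`
(i.e. time slot `t+1`) uses the noise of index `t`. -/
def traj {n : ℕ} {Ω : Type} (choice : Finset (Fin n) → ℝ → Fin n)
    (a : ℕ → Ω → ℕ) (s : Fin n → ℕ → Ω → ℕ) (U : ℕ → Ω → ℝ)
    (α : State n) : ℕ → Ω → State n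
  | 0 => fun _ => α
  | (t+1) => fun ω => step choice (traj choice a s U α t ω) (a t ω) (fun i => s i t ω) (U t ω)

/-- Index type for the driving noise: arrivals, services, tie-breaking uniforms. -/
def NoiseIdx (n : ℕ) := (ℕ ⊕ (Fin n × ℕ)) ⊕ ℕ

/-- Value type of each noise coordinate. -/
def NoiseType {n : ℕ} : NoiseIdx n → Type
  | .inl (.inl _) => ℕ
  | .inl (.inr _) => ℕ
  | .inr _ => ℝ

instance {n : ℕ} : ∀ k : NoiseIdx n, MeasurableSpace (NoiseType k)
  | .inl (.inl _) => inferInstanceAs (MeasurableSpace ℕ)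
  | .inl (.inr _) => inferInstanceAs (MeasurableSpace ℕ)
  | .inr _ => inferInstanceAs (MeasurableSpace ℝ)

/-- The combined noise family (arrivals, services, tie-breaking uniforms). -/
def noise {n : ℕ} {Ω : Type} (a : ℕ → Ω → ℕ) (s : Fin n → ℕ → Ω → ℕ)
    (U : ℕ → Ω → ℝ) : ∀ k : NoiseIdx n, Ω → NoiseType k
  | .inl (.inl t) => a t
  | .inl (.inr p) => s p.1 p.2
  | .inr t => U t

/-- The empty state with Last-Idle server `i`. -/
def emptyState {n : ℕ} (i : Fin n) : State n := (fun _ => 0, i)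

/-- First time `t ≥ 1` at which the process `X` lies in `B` (with value `∞ ∈ ℝ≥0∞`
if this never happens). -/
noncomputable def hitTime {n : ℕ} {Ω : Type} (X : ℕ → Ω → State n)
    (B : Set (State n)) (ω : Ω) : ℝ≥0∞ :=
  sInf {x : ℝ≥0∞ | ∃ t : ℕ, 1 ≤ t ∧ X t ω ∈ B ∧ x = (t : ℝ≥0∞)}

/-- The event `Ω_t`: some server other than the Last-Idle server is idle. -/
def boundaryEvt {n : ℕ} (x : State n) : Prop := ∃ i, i ≠ x.2 ∧ x.1 i = 0

/-- The sampling times `τ_k`: the successive (random) times `t ≥ 1` at which `Ω_t` occurs. -/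
noncomputable def sampleTime {n : ℕ} {Ω : Type} (X : ℕ → Ω → State n) : ℕ → Ω → ℕ
  | 0 => fun ω => sInf {t | 1 ≤ t ∧ boundaryEvt (X t ω)}
  | (k+1) => fun ω => sInf {t | sampleTime X k ω < t ∧ boundaryEvt (X t ω)}

/-- The sampled chain `Y_k = X (τ_k)`. -/
noncomputable def sampled {n : ℕ} {Ω : Type} (X : ℕ → Ω → State n) (k : ℕ) (ω : Ω) : State n :=
  X (sampleTime X k ω) ω

/-- The tie-breaking variable `ξ_t`, `t ≥ 1`: the uniform choice among the servers idle at
time `t − 1` (which is the new Last-Idle server when some server is idle at `t − 1`). -/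
def xi {n : ℕ} {Ω : Type} (choice : Finset (Fin n) → ℝ → Fin n) (U : ℕ → Ω → ℝ)
    (X : ℕ → Ω → State n) (t : ℕ) (ω : Ω) : Fin n :=
  choice (idleSet ((X (t - 1) ω).1)) (U (t - 1) ω)

/-- The σ-algebra `ℱ^ξ_t = σ(X 0, …, X t, ξ 1, …, ξ (t+1))`. -/
noncomputable def filtXi {n : ℕ} {Ω : Type} (choice : Finset (Fin n) → ℝ → Fin n)
    (U : ℕ → Ω → ℝ) (X : ℕ → Ω → State n) (t : ℕ) : MeasurableSpace Ω :=
  (⨆ r ∈ Set.Iic t, MeasurableSpace.comap (X r) ⊤) ⊔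
    (⨆ r ∈ Set.Iic t, MeasurableSpace.comap (xi choice U X (r + 1)) ⊤)

/-- The Lyapunov function `L α = ∑ i, (α i) ^ (1 + γ)` (valued in `ℝ≥0∞`). -/
noncomputable def lyap {n : ℕ} (γ : ℝ) (x : State n) : ℝ≥0∞ :=
  ∑ i, (x.1 i : ℝ≥0∞) ^ ((1 : ℝ) + γ)

/-- `σ = inf {k ≥ 0 : Y_k ∈ A}`, the first sampling index at which the sampled chain is in
`A` (`∞ ∈ ℕ∞` if there is none). -/
noncomputable def hitIdx {n : ℕ} {Ω : Type} (X : ℕ → Ω → State n)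
    (A : Set (State n)) (ω : Ω) : ℕ∞ :=
  sInf {k : ℕ∞ | ∃ m : ℕ, k = (m : ℕ∞) ∧ sampled X m ω ∈ A}

end PI

/-!
For a slot index `u`, the event `E ∩ {τ_k ≤ u < τ_{k+1}}` is, up to a null set, decided by
`E ∈ ℱ^ξ_{τ_k}` and by the trajectory up to time `u`, hence by noise other than the service
capacity `s i u`; so `s i u` is independent of it, and
`E[s i u; E ∩ {τ_k ≤ u < τ_{k+1}}] = μ_i P(E ∩ {τ_k ≤ u < τ_{k+1}})`. Summing over `u` gives the
identity. The null set is where no sampling time follows `τ_k`, which services of at least one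
per slot rule out.
-/

section Wald

variable {Ω : Type*} {mΩ : MeasurableSpace Ω} {μ : Measure Ω}

theorem setLIntegral_eq_lintegral_mul_measure_of_indep {m : MeasurableSpace Ω}
    {f : Ω → ℝ≥0∞} {A : Set Ω} (hf : Measurable[mΩ] f) (hm : m ≤ mΩ)
    (hind : Indep (MeasurableSpace.comap f inferInstance) m μ) (hA : MeasurableSet[m] A) :
    ∫⁻ ω in A, f ω ∂μ = (∫⁻ ω, f ω ∂μ) * μ A := by
  have hmul := lintegral_mul_eq_lintegral_mul_lintegral_of_independent_measurableSpace
    hf.comap_le hm hind (comap_measurable f) (measurable_const.indicator hA)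
    (g := A.indicator 1)
  rw [lintegral_indicator_one (hm _ hA)] at hmul
  rw [← hmul, ← lintegral_indicator (hm _ hA)]
  congr 1 with ω
  by_cases hω : ω ∈ A <;> simp [hω]

theorem setLIntegral_sum_eq_mul_setLIntegral_card {f : ℕ → Ω → ℝ≥0∞} {c : ℝ≥0∞}
    {G : ℕ → MeasurableSpace Ω} {I : Ω → Finset ℕ} {E : Set Ω}
    (hf : ∀ u, Measurable (f u)) (hmean : ∀ u, ∫⁻ ω, f u ω ∂μ = c) (hG : ∀ u, G u ≤ mΩ)
    (hind : ∀ u, Indep (MeasurableSpace.comap (f u) inferInstance) (G u) μ)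
    (hE : MeasurableSet E)
    (hA : ∀ u, ∃ A : Set Ω, MeasurableSet[G u] A ∧ (E ∩ {ω | u ∈ I ω} : Set Ω) =ᵐ[μ] A) :
    ∫⁻ ω in E, ∑ u ∈ I ω, f u ω ∂μ = c * ∫⁻ ω in E, ((I ω).card : ℝ≥0∞) ∂μ := by
  choose A hAG hAE using hA
  have hsplit : ∀ g : ℕ → Ω → ℝ≥0∞, (∀ u, Measurable (g u)) →
      ∫⁻ ω in E, ∑ u ∈ I ω, g u ω ∂μ = ∑' u, ∫⁻ ω in A u, g u ω ∂μ := by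
    intro g hg
    have hpt : ∀ ω, E.indicator (fun ω => ∑ u ∈ I ω, g u ω) ω
        = ∑' u, (E ∩ {ω | u ∈ I ω}).indicator (g u) ω := by
      intro ω
      by_cases hω : ω ∈ E
      · rw [Set.indicator_of_mem hω, sum_eq_tsum_indicator]
        exact tsum_congr fun u => by simp [Set.indicator, hω]
      · simp [hω]
    have hae : ∀ u, (E ∩ {ω | u ∈ I ω}).indicator (g u) =ᵐ[μ] (A u).indicator (g u) :=
      fun u => indicator_ae_eq_of_ae_eq_set (hAE u)
    rw [← lintegral_indicator hE, funext hpt,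
      lintegral_tsum fun u => ((hg u).indicator (hG u _ (hAG u))).aemeasurable.congr (hae u).symm]
    exact tsum_congr fun u => by
      rw [lintegral_congr_ae (hae u), lintegral_indicator (hG u _ (hAG u))]
  have hcount := hsplit (fun _ _ => 1) fun _ => measurable_const
  simp only [Finset.sum_const, nsmul_eq_mul, mul_one, setLIntegral_const, one_mul] at hcount
  rw [hcount, hsplit f hf, ← ENNReal.tsum_mul_left]
  exact tsum_congr fun u => by
    rw [setLIntegral_eq_lintegral_mul_measure_of_indep (hf u) (hG u) (hind u) (hAG u), hmean]

end Wald

section StoppedSets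

variable {Ω : Type*} {F : ℕ → MeasurableSpace Ω} {τ : Ω → ℕ} {E : Set Ω}

theorem measurableSet_of_forall_inter_le [m : MeasurableSpace Ω] (hF : ∀ t, F t ≤ m)
    (hE : ∀ t, MeasurableSet[F t] (E ∩ {ω | τ ω ≤ t})) : MeasurableSet E := by
  have hcover : E = ⋃ t, E ∩ {ω | τ ω ≤ t} := by
    ext ω
    simp only [Set.mem_iUnion, Set.mem_inter_iff, Set.mem_ofPred_eq]
    exact ⟨fun h => ⟨τ ω, h, le_rfl⟩, fun ⟨_, h, _⟩ => h⟩
  rw [hcover]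
  exact MeasurableSet.iUnion fun t => hF t _ (hE t)

theorem measurableSet_inter_eq_of_forall_inter_le (hF : Monotone F)
    (hE : ∀ t, MeasurableSet[F t] (E ∩ {ω | τ ω ≤ t})) (t : ℕ) :
    MeasurableSet[F t] (E ∩ {ω | τ ω = t}) := by
  cases t with
  | zero => simpa using hE 0
  | succ t =>
    have hdiff : E ∩ {ω | τ ω = t + 1} = (E ∩ {ω | τ ω ≤ t + 1}) \ (E ∩ {ω | τ ω ≤ t}) := by
      ext ω
      by_cases hω : ω ∈ E <;> simp [hω]
      omega
    rw [hdiff]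
    exact (hE (t + 1)).diff (hF t.le_succ _ (hE t))

end StoppedSets

theorem comap_top_le_of_measurable {Ω β : Type*} {m : MeasurableSpace Ω} [MeasurableSpace β]
    [DiscreteMeasurableSpace β] {f : Ω → β} (hf : Measurable[m] f) :
    MeasurableSpace.comap f ⊤ ≤ m :=
  MeasurableSpace.comap_le_iff_le_map.2 fun S _ => hf (MeasurableSet.of_discrete (s := S))

theorem ae_mem_of_restrict_Icc_zero_one_eq_one {S : Set ℝ} (hS : MeasurableSet S)
    (h : volume.restrict (Set.Icc (0 : ℝ) 1) S = 1) :
    ∀ᵐ u ∂volume.restrict (Set.Icc (0 : ℝ) 1), u ∈ S := by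
  rw [ae_mem_iff_measure_eq hS.nullMeasurableSet, h]
  simp [Real.volume_Icc]

namespace PI

section Measurability

variable {n : ℕ} {Ω : Type} {m : MeasurableSpace Ω} (choice : Finset (Fin n) → ℝ → Fin n)
  (a : ℕ → Ω → ℕ) (s : Fin n → ℕ → Ω → ℕ) (U : ℕ → Ω → ℝ)

theorem measurable_step (hchoice : ∀ I, Measurable (choice I)) (x : State n) (b : ℕ)
    (v : Fin n → ℕ) : Measurable (step choice x b v) := by
  unfold step
  split_ifs
  · exact (measurable_of_countable fun l : Fin n =>
      ((fun i => x.1 i + (if l = i then b else 0) - v i, l) : State n)).comp (hchoice _)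
  · exact measurable_const

theorem measurable_traj (hchoice : ∀ I, Measurable (choice I)) (α : State n) {t : ℕ}
    (ha : ∀ r < t, Measurable[m] (a r)) (hs : ∀ j, ∀ r < t, Measurable[m] (s j r))
    (hU : ∀ r < t, Measurable[m] (U r)) : Measurable[m] (traj choice a s U α t) := by
  induction t with
  | zero => exact measurable_const
  | succ t ih =>
    have hstep : Measurable fun p : (State n × ℕ × (Fin n → ℕ)) × ℝ =>
        step choice p.1.1 p.1.2.1 p.1.2.2 p.2 :=
      measurable_from_prod_countable_right fun x =>
        measurable_step choice hchoice x.1 x.2.1 x.2.2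
    have hprev := ih (fun r hr => ha r (by omega)) (fun j r hr => hs j r (by omega))
      (fun r hr => hU r (by omega))
    have hnoise : Measurable[m] fun ω =>
        ((traj choice a s U α t ω, a t ω, fun j => s j t ω), U t ω) :=
      (hprev.prodMk ((ha t t.lt_succ_self).prodMk
        (measurable_pi_lambda _ fun j => hs j t t.lt_succ_self))).prodMk (hU t t.lt_succ_self)
    exact hstep.comp hnoise

theorem measurable_xi_succ (hchoice : ∀ I, Measurable (choice I)) (X : ℕ → Ω → State n)
    {t : ℕ} (hX : Measurable[m] (X t)) (hU : Measurable[m] (U t)) :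
    Measurable[m] (xi choice U X (t + 1)) := by
  have hchoose : Measurable fun p : State n × ℝ => choice (idleSet p.1.1) p.2 :=
    measurable_from_prod_countable_right fun x => hchoice (idleSet x.1)
  exact hchoose.comp (hX.prodMk hU)

theorem filtXi_le (X : ℕ → Ω → State n) {t : ℕ} (hX : ∀ r ≤ t, Measurable[m] (X r))
    (hxi : ∀ r ≤ t, Measurable[m] (xi choice U X (r + 1))) : filtXi choice U X t ≤ m :=
  sup_le (iSup₂_le fun r hr => comap_top_le_of_measurable (hX r hr))
    (iSup₂_le fun r hr => comap_top_le_of_measurable (hxi r hr))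

theorem measurable_noise (ha : ∀ t, Measurable[m] (a t)) (hs : ∀ j t, Measurable[m] (s j t))
    (hU : ∀ t, Measurable[m] (U t)) (j : NoiseIdx n) : Measurable[m] (noise a s U j) := by
  rcases j with (t | ⟨j, t⟩) | t
  exacts [ha t, hs j t, hU t]

theorem filtXi_traj_le (hchoice : ∀ I, Measurable (choice I)) (α : State n)
    (ha : ∀ t, Measurable[m] (a t)) (hs : ∀ j t, Measurable[m] (s j t))
    (hU : ∀ t, Measurable[m] (U t)) (t : ℕ) : filtXi choice U (traj choice a s U α) t ≤ m :=
  have htraj : ∀ r, Measurable[m] (traj choice a s U α r) := fun _ =>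
    measurable_traj choice a s U hchoice α (fun r _ => ha r) (fun j r _ => hs j r)
      (fun r _ => hU r)
  filtXi_le choice U _ (fun r _ => htraj r)
    (fun r _ => measurable_xi_succ choice U hchoice _ (htraj r) (hU r))

theorem filtXi_mono (X : ℕ → Ω → State n) : Monotone (filtXi choice U X) :=
  fun _ _ hts => sup_le_sup (biSup_mono fun _ hr => le_trans hr hts)
    (biSup_mono fun _ hr => le_trans hr hts)

end Measurability

section Recurrence

variable {n : ℕ} {Ω : Type} (choice : Finset (Fin n) → ℝ → Fin n)

theorem step_snd_of_not_boundaryEvt {x : State n} (hx : ¬ boundaryEvt x) {u : ℝ}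
    (hu : choice {x.2} u = x.2) (b : ℕ) (v : Fin n → ℕ) : (step choice x b v u).2 = x.2 := by
  have hidle : idleSet x.1 ⊆ {x.2} := fun j hj =>
    Finset.mem_singleton.2 <| by_contra fun hne => hx ⟨j, hne, (Finset.mem_filter.1 hj).2⟩
  show (if (idleSet x.1).Nonempty then choice (idleSet x.1) u else x.2) = x.2
  split_ifs with hne
  · rwa [(Finset.subset_singleton_iff.1 hidle).resolve_left hne.ne_empty]
  · rfl

theorem step_fst_of_ne (x : State n) (b : ℕ) (v : Fin n → ℕ) (u : ℝ) {j : Fin n}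
    (hj : (step choice x b v u).2 ≠ j) : (step choice x b v u).1 j = x.1 j - v j := by
  show x.1 j + (if (step choice x b v u).2 = j then b else 0) - v j = x.1 j - v j
  rw [if_neg hj, add_zero]

/-- The Last-Idle server can only change when another server is idle, and meanwhile every other
server drains at rate at least one. -/
theorem exists_boundaryEvt_traj_gt (hn : 2 ≤ n) (a : ℕ → Ω → ℕ) (s : Fin n → ℕ → Ω → ℕ)
    (U : ℕ → Ω → ℝ) (α : State n) {ω : Ω} (hs : ∀ j t, 1 ≤ s j t ω)
    (hU : ∀ l t, choice {l} (U t ω) = l) (t₀ : ℕ) :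
    ∃ t, t₀ < t ∧ boundaryEvt (traj choice a s U α t ω) := by
  by_contra! hnone
  set X := fun t => traj choice a s U α t ω
  set l := (X (t₀ + 1)).2
  have hLI : ∀ r, (X (t₀ + 1 + r)).2 = l := by
    intro r
    induction r with
    | zero => rfl
    | succ r ih =>
      rw [← ih, ← add_assoc]
      exact step_snd_of_not_boundaryEvt choice (hnone _ (by omega)) (by rw [ih]; exact hU l _) _ _
  obtain ⟨j, hjl⟩ := Fintype.exists_ne_of_one_lt_card (by rw [Fintype.card_fin]; omega) l
  have hdrain : ∀ r, (X (t₀ + 1 + r)).1 j ≤ (X (t₀ + 1)).1 j - r := by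
    intro r
    induction r with
    | zero => simp
    | succ r ih =>
      have hstep : (X (t₀ + 1 + r + 1)).1 j = (X (t₀ + 1 + r)).1 j - s j (t₀ + 1 + r) ω :=
        step_fst_of_ne choice _ _ _ _ ((hLI (r + 1)).trans_ne hjl.symm)
      have := hs j (t₀ + 1 + r)
      rw [← add_assoc, hstep]
      omega
  set r := (X (t₀ + 1)).1 j
  have hempty : (X (t₀ + 1 + r)).1 j = 0 := by have := hdrain r; omega
  exact hnone (t₀ + 1 + r) (by omega) ⟨j, (hLI r).symm ▸ hjl, hempty⟩

theorem ae_exists_boundaryEvt_traj_gt [MeasurableSpace Ω] {P : Measure Ω} (hn : 2 ≤ n)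
    (a : ℕ → Ω → ℕ) (s : Fin n → ℕ → Ω → ℕ) (U : ℕ → Ω → ℝ) (α : State n)
    (hs : ∀ j t, ∀ᵐ ω ∂P, 1 ≤ s j t ω) (hU : ∀ l t, ∀ᵐ ω ∂P, choice {l} (U t ω) = l) :
    ∀ᵐ ω ∂P, ∀ t₀, ∃ t, t₀ < t ∧ boundaryEvt (traj choice a s U α t ω) := by
  have hs' : ∀ᵐ ω ∂P, ∀ j t, 1 ≤ s j t ω := ae_all_iff.2 fun j => ae_all_iff.2 (hs j)
  have hU' : ∀ᵐ ω ∂P, ∀ l t, choice {l} (U t ω) = l := ae_all_iff.2 fun l => ae_all_iff.2 (hU l)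
  filter_upwards [hs', hU'] with ω hsω hUω
  exact exists_boundaryEvt_traj_gt choice hn a s U α hsω hUω

theorem lt_sampleTime_succ_iff (X : ℕ → Ω → State n) {k : ℕ} {ω : Ω}
    (h : ∃ t, sampleTime X k ω < t ∧ boundaryEvt (X t ω)) (u : ℕ) :
    u < sampleTime X (k + 1) ω ↔ ∀ t, sampleTime X k ω < t → t ≤ u → ¬ boundaryEvt (X t ω) := by
  have hne : {t | sampleTime X k ω < t ∧ boundaryEvt (X t ω)}.Nonempty := h
  show u + 1 ≤ sInf _ ↔ _
  rw [le_csInf_iff'' hne]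
  refine forall_congr' fun t => ⟨fun H ht htu hb => ?_, fun H ⟨ht, hb⟩ => ?_⟩
  · have := H ⟨ht, hb⟩; omega
  · by_contra! htu; exact H ht (by omega) hb

end Recurrence

section NoiseExcept

variable {n : ℕ} {Ω : Type} (choice : Finset (Fin n) → ℝ → Fin n)
  (a : ℕ → Ω → ℕ) (s : Fin n → ℕ → Ω → ℕ) (U : ℕ → Ω → ℝ)

abbrev serviceIdx (i : Fin n) (u : ℕ) : NoiseIdx n := .inl (.inr (i, u))

abbrev noiseExcept (j : NoiseIdx n) : MeasurableSpace Ω :=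
  ⨆ j' ∈ ({j}ᶜ : Set (NoiseIdx n)), MeasurableSpace.comap (noise a s U j') inferInstance

theorem measurable_noise_noiseExcept {j j' : NoiseIdx n} (h : j' ≠ j) :
    Measurable[noiseExcept a s U j] (noise a s U j') :=
  Measurable.of_comap_le <| le_iSup₂ (f := fun j' (_ : j' ∈ ({j}ᶜ : Set (NoiseIdx n))) =>
    MeasurableSpace.comap (noise a s U j') inferInstance) j' h

theorem noiseExcept_le [m : MeasurableSpace Ω] (hmeas : ∀ j, Measurable (noise a s U j))
    (j : NoiseIdx n) : noiseExcept a s U j ≤ m :=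
  iSup₂_le fun j' _ => (hmeas j').comap_le

theorem indep_noise_noiseExcept [MeasurableSpace Ω] {P : Measure Ω}
    (hmeas : ∀ j, Measurable (noise a s U j)) (hindep : iIndepFun (noise a s U) P)
    (j : NoiseIdx n) :
    Indep (MeasurableSpace.comap (noise a s U j) inferInstance) (noiseExcept a s U j) P := by
  have h := indep_biSup_compl (fun j => (hmeas j).comap_le) hindep.iIndep {j}
  rwa [iSup_singleton] at h

variable {choice} (α : State n) {i : Fin n} {u : ℕ}

theorem measurable_traj_noiseExcept (hchoice : ∀ I, Measurable (choice I)) {t : ℕ}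
    (htu : t ≤ u) :
    Measurable[noiseExcept a s U (serviceIdx i u)] (traj choice a s U α t) :=
  measurable_traj choice a s U hchoice α
    (fun r _ => measurable_noise_noiseExcept a s U (j' := .inl (.inl r))
      (Sum.inl_injective.ne Sum.inl_ne_inr))
    (fun j r hr => measurable_noise_noiseExcept a s U (j' := .inl (.inr (j, r)))
      (Sum.inl_injective.ne <| Sum.inr_injective.ne fun h =>
        (hr.trans_le htu).ne (congrArg Prod.snd h)))
    (fun r _ => measurable_noise_noiseExcept a s U (j' := .inr r) Sum.inr_ne_inl)

theorem filtXi_le_noiseExcept (hchoice : ∀ I, Measurable (choice I)) {t : ℕ}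
    (htu : t ≤ u) :
    filtXi choice U (traj choice a s U α) t ≤ noiseExcept a s U (serviceIdx i u) :=
  filtXi_le choice U _
    (fun _ hr => measurable_traj_noiseExcept a s U α hchoice (hr.trans htu))
    (fun r hr => measurable_xi_succ choice U hchoice _
      (measurable_traj_noiseExcept a s U α hchoice (hr.trans htu))
      (measurable_noise_noiseExcept a s U (j' := .inr r) Sum.inr_ne_inl))

theorem measurableSet_noiseExcept_no_boundaryEvt_until (hchoice : ∀ I, Measurable (choice I))
    {k : ℕ} {E : Set Ω}
    (hE : ∀ t, MeasurableSet[filtXi choice U (traj choice a s U α) t]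
      (E ∩ {ω | sampleTime (traj choice a s U α) k ω ≤ t})) :
    MeasurableSet[noiseExcept a s U (serviceIdx i u)]
      (E ∩ {ω | sampleTime (traj choice a s U α) k ω ≤ u ∧ ∀ t,
        sampleTime (traj choice a s U α) k ω < t → t ≤ u →
          ¬ boundaryEvt (traj choice a s U α t ω)}) := by
  set X := traj choice a s U α
  have hunion : E ∩ {ω | sampleTime X k ω ≤ u ∧
        ∀ t, sampleTime X k ω < t → t ≤ u → ¬ boundaryEvt (X t ω)}
      = ⋃ m ≤ u, (E ∩ {ω | sampleTime X k ω = m}) ∩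
          ⋂ t ∈ Set.Ioc m u, X t ⁻¹' {x | ¬ boundaryEvt x} := by
    ext ω
    simp only [Set.mem_inter_iff, Set.mem_iUnion, Set.mem_iInter, Set.mem_preimage,
      Set.mem_Ioc, Set.mem_ofPred_eq, exists_prop]
    constructor
    · rintro ⟨hωE, hle, hquiet⟩
      exact ⟨_, hle, ⟨hωE, rfl⟩, fun t ht => hquiet t ht.1 ht.2⟩
    · rintro ⟨_, hle, ⟨hωE, rfl⟩, hquiet⟩
      exact ⟨hωE, hle, fun t h₁ h₂ => hquiet t ⟨h₁, h₂⟩⟩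
  rw [hunion]
  refine MeasurableSet.iUnion fun m => MeasurableSet.iUnion fun hm => .inter ?_ ?_
  · exact filtXi_le_noiseExcept a s U α hchoice hm _
      (measurableSet_inter_eq_of_forall_inter_le (filtXi_mono choice U X) hE m)
  · exact MeasurableSet.iInter fun t => MeasurableSet.iInter fun ht =>
      measurable_traj_noiseExcept a s U α hchoice ht.2 MeasurableSet.of_discrete

theorem exists_measurableSet_noiseExcept_ae_eq_Ico [MeasurableSpace Ω] {P : Measure Ω}
    (hchoice : ∀ I, Measurable (choice I)) {k : ℕ} {E : Set Ω}
    (hE : ∀ t, MeasurableSet[filtXi choice U (traj choice a s U α) t]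
      (E ∩ {ω | sampleTime (traj choice a s U α) k ω ≤ t}))
    (hbdry : ∀ᵐ ω ∂P, ∀ t₀, ∃ t, t₀ < t ∧ boundaryEvt (traj choice a s U α t ω)) :
    ∃ A : Set Ω, MeasurableSet[noiseExcept a s U (serviceIdx i u)] A ∧
      (E ∩ {ω | u ∈ Finset.Ico (sampleTime (traj choice a s U α) k ω)
        (sampleTime (traj choice a s U α) (k + 1) ω)} : Set Ω) =ᵐ[P] A := by
  refine ⟨_, measurableSet_noiseExcept_no_boundaryEvt_until a s U α hchoice hE,
    eventuallyEq_set.2 ?_⟩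
  -- off `hbdry`, `τ_{k+1} = sInf ∅ = 0` and the two sets may differ
  filter_upwards [hbdry] with ω hω
  simp only [Set.mem_inter_iff, Set.mem_ofPred_eq, Finset.mem_Ico,
    lt_sampleTime_succ_iff _ (hω _)]

end NoiseExcept

end PI

/-- The conditional expectations are compared in integrated form, over the sets `E` of the
stopped σ-algebra `ℱ^ξ_{τ_k}` inside `{i ≠ l_k}`. Slot `t` uses the service capacity `s i (t-1)`,
so the slots `τ_k + 1, …, τ_{k+1}` are the noise indices `τ_k ≤ u < τ_{k+1}`. -/
theorem pi_wald_identity_for_interval_general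
    {n : ℕ} (hn : 2 ≤ n) {Ω : Type} [MeasurableSpace Ω]
    -- `P α` is the law of the system driven by the noise below, started at `X 0 = α`
    (P : PI.State n → Measure Ω)
    (a : ℕ → Ω → ℕ) (s : Fin n → ℕ → Ω → ℕ) (U : ℕ → Ω → ℝ)
    (choice : Finset (Fin n) → ℝ → Fin n)
    (νs : Fin n → Measure ℕ)
    (μ : Fin n → ℝ) (smax : ℕ)
    (ha_meas : ∀ t, Measurable (a t)) (hs_meas : ∀ i t, Measurable (s i t))
    (hU_meas : ∀ t, Measurable (U t)) (hchoice_meas : ∀ I, Measurable (choice I))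
    -- the arrivals are i.i.d. with law `νa`, the services of server `i` i.i.d. with law `νs i`,
    -- the tie-breaking noise is uniform on `[0,1]`, and all are mutually independent,
    -- under every starting state
    (hs_law : ∀ α i t, Measure.map (s i t) (P α) = νs i)
    (hU_law : ∀ α t, Measure.map (U t) (P α) = volume.restrict (Set.Icc (0:ℝ) 1))
    (hindep : ∀ α, iIndepFun (PI.noise a s U) (P α))
    -- `1 ≤ s i t ≤ smax` and `E[s i t] = μ i`
    (hs_bdd : ∀ i, (νs i) {k : ℕ | ¬(1 ≤ k ∧ k ≤ smax)} = 0)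
    (hs_mean : ∀ i, ∫⁻ k, (k : ℝ≥0∞) ∂(νs i) = ENNReal.ofReal (μ i))
    -- `choice I` applied to a uniform `[0,1]` variable is uniform on `I`
    (hchoice_unif : ∀ I : Finset (Fin n), I.Nonempty → ∀ i ∈ I,
      (volume.restrict (Set.Icc (0:ℝ) 1)) {u | choice I u = i} = (I.card : ℝ≥0∞)⁻¹)
    :
    ∀ X : PI.State n → ℕ → Ω → PI.State n, X = PI.traj choice a s U →
    ∀ α : PI.State n, ∀ k : ℕ, ∀ i : Fin n,
    ∀ E : Set Ω,
      (∀ t : ℕ, MeasurableSet[PI.filtXi choice U (X α) t]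
          (E ∩ {ω | PI.sampleTime (X α) k ω ≤ t})) →
      (∀ ω ∈ E, i ≠ (X α (PI.sampleTime (X α) k ω + 1) ω).2) →
      ∫⁻ ω in E,
          (∑ t ∈ Finset.Ico (PI.sampleTime (X α) k ω) (PI.sampleTime (X α) (k + 1) ω),
            (s i t ω : ℝ≥0∞)) ∂(P α)
        = ENNReal.ofReal (μ i)
            * ∫⁻ ω in E,
                ((PI.sampleTime (X α) (k + 1) ω - PI.sampleTime (X α) k ω : ℕ) : ℝ≥0∞)
                ∂(P α) := by
  intro X hX α k i E hE _
  subst hX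
  have hnoise := PI.measurable_noise a s U ha_meas hs_meas hU_meas
  have hs_pos : ∀ j t, ∀ᵐ ω ∂P α, 1 ≤ s j t ω := fun j t =>
    ae_of_ae_map (hs_meas j t).aemeasurable <| by
      rw [hs_law α j t]
      refine ae_iff.2 (measure_mono_null ?_ (hs_bdd j))
      exact fun _ hk h => hk h.1
  have hU_singleton : ∀ l t, ∀ᵐ ω ∂P α, choice {l} (U t ω) = l := fun l t =>
    ae_of_ae_map (hU_meas t).aemeasurable <| by
      rw [hU_law α t]
      exact ae_mem_of_restrict_Icc_zero_one_eq_one (S := {u | choice {l} u = l})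
        (hchoice_meas {l} (measurableSet_singleton l))
        (by simpa using hchoice_unif {l} (by simp) l (by simp))
  have hwald := setLIntegral_sum_eq_mul_setLIntegral_card (μ := P α)
    (f := fun u ω => (s i u ω : ℝ≥0∞)) (c := ENNReal.ofReal (μ i))
    (I := fun ω => Finset.Ico (PI.sampleTime (PI.traj choice a s U α) k ω)
      (PI.sampleTime (PI.traj choice a s U α) (k + 1) ω))
    (fun u => measurable_from_top.comp (hs_meas i u))
    (fun u => by
      rw [← hs_mean i, ← hs_law α i u, lintegral_map measurable_from_top (hs_meas i u)])
    (fun _ => PI.noiseExcept_le a s U hnoise _)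
    (fun u => indep_of_indep_of_le_left (PI.indep_noise_noiseExcept a s U hnoise (hindep α) _)
      (measurable_from_top.comp (comap_measurable (s i u))).comap_le)
    (measurableSet_of_forall_inter_le
      (PI.filtXi_traj_le choice a s U hchoice_meas α ha_meas hs_meas hU_meas) hE)
    (fun u => PI.exists_measurableSet_noiseExcept_ae_eq_Ico a s U α hchoice_meas hE
      (PI.ae_exists_boundaryEvt_traj_gt choice hn a s U α hs_pos hU_singleton))
  simpa using hwald

/-- **A Wald-type identity for the service consumed over a sampling interval** (eqs.
(s_i1)–(s_i3)).  Fix `k ≥ 0` and a server `i`, and let `l_k = LI (τ_k + 1)` be the Last-Idle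
server of the interval `[τ_k + 1, τ_{k+1}]`.  Then, almost surely on the event `{i ≠ l_k}`,
`E[ ∑_{t = τ_k + 1}^{τ_{k+1}} s_i(t) | ℱ^ξ_{τ_k} ] = μ_i · E[ τ_{k+1} − τ_k | ℱ^ξ_{τ_k} ]`.
The conditional-expectation identity is stated in its (equivalent) integrated form: for every
set `E` of the stopped σ-algebra `ℱ^ξ_{τ_k}` contained in the event `{i ≠ l_k}`, the equality
of the corresponding integrals holds in `[0,∞]`.  (In the indexing used here, the service
capacity of server `i` in slot `t` is `s i (t-1)`, so the sum over slots
`τ_k + 1, …, τ_{k+1}` is the sum over noise indices `τ_k ≤ u < τ_{k+1}`.) -/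
theorem pi_wald_identity_for_interval
    {n : ℕ} (hn : 2 ≤ n) {Ω : Type} [MeasurableSpace Ω]
    -- `P α` is the law of the system driven by the noise below, started at `X 0 = α`
    (P : PI.State n → Measure Ω) (hP : ∀ α, IsProbabilityMeasure (P α))
    (a : ℕ → Ω → ℕ) (s : Fin n → ℕ → Ω → ℕ) (U : ℕ → Ω → ℝ)
    (choice : Finset (Fin n) → ℝ → Fin n)
    (νa : Measure ℕ) (νs : Fin n → Measure ℕ)
    (lam σa : ℝ) (μ : Fin n → ℝ) (smax : ℕ)
    (ha_meas : ∀ t, Measurable (a t)) (hs_meas : ∀ i t, Measurable (s i t))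
    (hU_meas : ∀ t, Measurable (U t)) (hchoice_meas : ∀ I, Measurable (choice I))
    -- the arrivals are i.i.d. with law `νa`, the services of server `i` i.i.d. with law `νs i`,
    -- the tie-breaking noise is uniform on `[0,1]`, and all are mutually independent,
    -- under every starting state
    (ha_law : ∀ α t, Measure.map (a t) (P α) = νa)
    (hs_law : ∀ α i t, Measure.map (s i t) (P α) = νs i)
    (hU_law : ∀ α t, Measure.map (U t) (P α) = volume.restrict (Set.Icc (0:ℝ) 1))
    (hindep : ∀ α, iIndepFun (PI.noise a s U) (P α))
    -- `P(a(1) = 0) > 0`, `E[a(1)] = λ`, `Var(a(1)) = σa² < ∞`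
    (ha0 : νa {0} ≠ 0)
    (ha_mean : ∫⁻ k, (k : ℝ≥0∞) ∂νa = ENNReal.ofReal lam)
    (ha_var : ∫⁻ k, ((k : ℝ≥0∞)) ^ 2 ∂νa = ENNReal.ofReal (lam ^ 2 + σa ^ 2))
    -- `1 ≤ s i t ≤ smax` and `E[s i t] = μ i`
    (hs_bdd : ∀ i, (νs i) {k : ℕ | ¬(1 ≤ k ∧ k ≤ smax)} = 0)
    (hs_mean : ∀ i, ∫⁻ k, (k : ℝ≥0∞) ∂(νs i) = ENNReal.ofReal (μ i))
    -- `choice I` applied to a uniform `[0,1]` variable is uniform on `I`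
    (hchoice_unif : ∀ I : Finset (Fin n), I.Nonempty → ∀ i ∈ I,
      (volume.restrict (Set.Icc (0:ℝ) 1)) {u | choice I u = i} = (I.card : ℝ≥0∞)⁻¹)
    :
    ∀ X : PI.State n → ℕ → Ω → PI.State n, X = PI.traj choice a s U →
    ∀ α : PI.State n, ∀ k : ℕ, ∀ i : Fin n,
    ∀ E : Set Ω,
      (∀ t : ℕ, MeasurableSet[PI.filtXi choice U (X α) t]
          (E ∩ {ω | PI.sampleTime (X α) k ω ≤ t})) →
      (∀ ω ∈ E, i ≠ (X α (PI.sampleTime (X α) k ω + 1) ω).2) →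
      ∫⁻ ω in E,
          (∑ t ∈ Finset.Ico (PI.sampleTime (X α) k ω) (PI.sampleTime (X α) (k + 1) ω),
            (s i t ω : ℝ≥0∞)) ∂(P α)
        = ENNReal.ofReal (μ i)
            * ∫⁻ ω in E,
                ((PI.sampleTime (X α) (k + 1) ω - PI.sampleTime (X α) k ω : ℕ) : ℝ≥0∞)
                ∂(P α) :=
  pi_wald_identity_for_interval_general hn P a s U choice νs μ smax ha_meas hs_meas hU_meas
    hchoice_meas hs_law hU_law hindep hs_bdd hs_mean hchoice_unif
end
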